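/- Let L be a norm-closed linear subspace of X′′ containing I(e), and let K ⊆ L be a cone containing 0 such that z + n ∈ K whenever z ∈ K and n ∈ L with n ≤ 0. Then P(a;Q) = D(a;K) holds for every a ∈ L if and only if the norm closure K̄ of K equals K_Q ∩ L. Moreover, in that case there is dual attainment: for every a ∈ L there exists z_a ∈ K̄ with D(a;K)•I(e) + z_a = a. -/

import Mathlib

open NormedSpace

/-- Positivity in the dual of an ordered normed space. -/
def dualNonneg (X : Type*) [NormedAddCommGroup X] [NormedSpace ℝ X] [Lattice X]
    (η : StrongDual ℝ X) : Prop :=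
  ∀ f : X, 0 ≤ f → 0 ≤ η f

/-- Positivity in the bidual. -/
def bidualNonneg (X : Type*) [NormedAddCommGroup X] [NormedSpace ℝ X] [Lattice X]
    (a : StrongDual ℝ (StrongDual ℝ X)) : Prop :=
  ∀ η : StrongDual ℝ X, dualNonneg X η → 0 ≤ a η

/-- The value of the primal problem `P(a; Q)`, as an extended real number. -/
noncomputable def Pval (X : Type*) [NormedAddCommGroup X] [NormedSpace ℝ X]
    (Q : Set (StrongDual ℝ X)) (a : StrongDual ℝ (StrongDual ℝ X)) : EReal :=
  sSup {x : EReal | ∃ η ∈ Q, x = ((a η : ℝ) : EReal)}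

/-- The value of the dual problem `D(a; K)` (with `inf ∅ = +∞`). -/
noncomputable def Dval (X : Type*) [NormedAddCommGroup X] [NormedSpace ℝ X]
    (e : X) (K : Set (StrongDual ℝ (StrongDual ℝ X))) (a : StrongDual ℝ (StrongDual ℝ X)) : EReal :=
  sInf {x : EReal | ∃ c : ℝ, x = (c : EReal) ∧
    ∃ z ∈ K, c • (inclusionInDoubleDual ℝ X e) + z = a}

/-!
For real `c`, `P(a; Q) ≤ c` says exactly that `a - c • I(e)` lies in `K_Q`, because every `η ∈ Q`
is normalised by `η(e) = 1`. For `a ∈ L`, `D(a; K) ≤ c` says exactly that `a - c • I(e)` lies in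
the closure of `K`: since the bidual norm is the order-unit norm of `I(e)`, an element at distance
`< ε` from `z ∈ K` lies below `z + ε • I(e)`, and `K` absorbs the nonpositive difference. Hence
`P = D` on `L` precisely when `K̄` and `K_Q ∩ L` have the same elements (`K̄ ⊆ L` as `L` is
closed). For the attainment, `P(a; Q)` is finite (`Q ≠ ∅` and `P(a; Q) ≤ ‖a‖`), so `c = D(a; K)`
is admissible in the second characterisation.
-/

open Filter Topology

lemma EReal.eq_of_forall_le_coe_iff {x y : EReal} (h : ∀ c : ℝ, x ≤ c ↔ y ≤ c) : x = y :=
  le_antisymm (EReal.le_of_forall_lt_iff_le.mp fun c hc => (h c).2 hc.le)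
    (EReal.le_of_forall_lt_iff_le.mp fun c hc => (h c).1 hc.le)

section Duality

variable {X : Type*} [NormedAddCommGroup X] [NormedSpace ℝ X] {e : X}

local notation "X′′" => StrongDual ℝ (StrongDual ℝ X)

local notation "𝟙" => inclusionInDoubleDual ℝ X e

lemma coe_apply_le_Pval {Q : Set (StrongDual ℝ X)} {η : StrongDual ℝ X} (hη : η ∈ Q) (a : X′′) :
    (a η : EReal) ≤ Pval X Q a :=
  le_sSup ⟨η, hη, rfl⟩

lemma Pval_le_coe_iff {Q : Set (StrongDual ℝ X)} (hQ : ∀ η ∈ Q, η e = 1) (a : X′′) (c : ℝ) :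
    Pval X Q a ≤ c ↔ ∀ η ∈ Q, (a - c • 𝟙) η ≤ 0 := by
  refine ⟨fun h η hη => ?_, fun h => sSup_le ?_⟩
  · have := EReal.coe_le_coe_iff.mp ((coe_apply_le_Pval hη a).trans h)
    simpa [dual_def, hQ η hη] using this
  · rintro _ ⟨η, hη, rfl⟩
    have := h η hη
    simp only [sub_apply, smul_apply, dual_def, hQ η hη, smul_eq_mul, mul_one, sub_nonpos]
      at this
    exact_mod_cast this

lemma Dval_le_of_sub_smul_mem {K : Set X′′} {a : X′′} {c : ℝ} (h : a - c • 𝟙 ∈ K) :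
    Dval X e K a ≤ c :=
  sInf_le ⟨c, rfl, _, h, add_sub_cancel _ _⟩

variable [Lattice X]

def HasOrderUnitBidualNorm (X : Type*) [NormedAddCommGroup X] [NormedSpace ℝ X] [Lattice X]
    (e : X) : Prop :=
  ∀ a : StrongDual ℝ (StrongDual ℝ X), ‖a‖ = sInf {c : ℝ |
    bidualNonneg X (a + c • inclusionInDoubleDual ℝ X e) ∧
    bidualNonneg X (c • inclusionInDoubleDual ℝ X e - a)}

lemma bidualNonneg_smul_sub_of_le (he : 0 ≤ e) {w : X′′} {c d : ℝ}
    (hc : bidualNonneg X (c • 𝟙 - w)) (hcd : c ≤ d) : bidualNonneg X (d • 𝟙 - w) := by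
  intro η hη
  have h := hc η hη
  simp only [sub_apply, smul_apply, dual_def, smul_eq_mul] at h ⊢
  nlinarith [hη e he]

lemma bidualNonneg_smul_sub_of_norm_lt (he : 0 ≤ e) (hbnorm : HasOrderUnitBidualNorm X e)
    {w : X′′} {ε : ℝ} (hw : ‖w‖ < ε) : bidualNonneg X (ε • 𝟙 - w) := by
  by_cases hS : {c : ℝ | bidualNonneg X (w + c • 𝟙) ∧ bidualNonneg X (c • 𝟙 - w)}.Nonempty
  · rw [hbnorm w] at hw
    obtain ⟨c, ⟨-, hc⟩, hcε⟩ := exists_lt_of_csInf_lt hS hw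
    exact bidualNonneg_smul_sub_of_le he hc hcε.le
  · -- `sInf ∅ = 0` in `ℝ`, so `w = 0`
    have hw0 : ‖w‖ = 0 := by
      rw [hbnorm w, Set.not_nonempty_iff_eq_empty.mp hS, Real.sInf_empty]
    intro η hη
    simpa [(norm_eq_zero (E := X′′)).mp hw0, dual_def] using
      mul_nonneg (hw0 ▸ hw).le (hη e he)

lemma apply_le_norm_of_dualNonneg (he : 0 ≤ e) (hbnorm : HasOrderUnitBidualNorm X e) (w : X′′)
    {η : StrongDual ℝ X} (hη : dualNonneg X η) (hη1 : η e = 1) : w η ≤ ‖w‖ := by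
  refine le_of_forall_gt_imp_ge_of_dense fun ε hε => ?_
  simpa [dual_def, hη1] using bidualNonneg_smul_sub_of_norm_lt he hbnorm hε η hη

lemma Pval_le_norm (he : 0 ≤ e) (hbnorm : HasOrderUnitBidualNorm X e)
    {Q : Set (StrongDual ℝ X)} (hQ : ∀ η ∈ Q, dualNonneg X η ∧ η e = 1) (a : X′′) :
    Pval X Q a ≤ ‖a‖ := by
  refine sSup_le ?_
  rintro _ ⟨η, hη, rfl⟩
  exact_mod_cast apply_le_norm_of_dualNonneg he hbnorm a (hQ η hη).1 (hQ η hη).2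

lemma sub_smul_mem_of_Dval_lt (he : 0 ≤ e) {L : Submodule ℝ X′′} (heL : 𝟙 ∈ L) {K : Set X′′}
    (hKmono : ∀ z ∈ K, ∀ n ∈ L, bidualNonneg X (-n) → z + n ∈ K)
    {a : X′′} {d : ℝ} (h : Dval X e K a < d) : a - d • 𝟙 ∈ K := by
  obtain ⟨_, ⟨c, rfl, z, hz, rfl⟩, hcd⟩ := sInf_lt_iff.mp h
  have hcd : c < d := EReal.coe_lt_coe_iff.mp hcd
  rw [show c • 𝟙 + z - d • 𝟙 = z + (c - d) • 𝟙 by module]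
  refine hKmono z hz _ (L.smul_mem _ heL) fun η hη => ?_
  simp only [neg_apply, smul_apply, dual_def, smul_eq_mul]
  nlinarith [hη e he]

lemma mem_closure_iff_forall_sub_smul_mem (he : 0 ≤ e) (hbnorm : HasOrderUnitBidualNorm X e)
    {L : Submodule ℝ X′′} (heL : 𝟙 ∈ L) {K : Set X′′} (hKL : K ⊆ L)
    (hKmono : ∀ z ∈ K, ∀ n ∈ L, bidualNonneg X (-n) → z + n ∈ K) {b : X′′} (hb : b ∈ L) :
    b ∈ closure K ↔ ∀ ε : ℝ, 0 < ε → b - ε • 𝟙 ∈ K := by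
  constructor
  · intro hbK ε hε
    obtain ⟨z, hz, hbz⟩ := (Metric.mem_closure_iff (α := X′′)).mp hbK ε hε
    have hbzL : b - z - ε • 𝟙 ∈ L :=
      L.sub_mem (M := X′′) (L.sub_mem (M := X′′) hb (hKL hz)) (L.smul_mem ε heL)
    rw [show b - ε • 𝟙 = z + (b - z - ε • 𝟙) by abel]
    refine hKmono z hz _ hbzL ?_
    rw [show -(b - z - ε • 𝟙) = ε • 𝟙 - (b - z) by abel]
    exact bidualNonneg_smul_sub_of_norm_lt he hbnorm (by rwa [← dist_eq_norm (E := X′′)])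
  · intro h
    -- written with `+` and `-ε`: continuity of subtraction is not found on `X′′`
    have hcont : Continuous fun ε : ℝ => b + (-ε) • 𝟙 := by fun_prop
    have hlim : Tendsto (fun ε : ℝ => b + (-ε) • 𝟙) (𝓝[>] 0) (𝓝 b) := by
      simpa using (hcont.tendsto 0).mono_left nhdsWithin_le_nhds
    refine mem_closure_of_tendsto hlim (eventually_nhdsWithin_of_forall fun ε hε => ?_)
    convert h ε hε using 1
    module

lemma Dval_le_coe_iff (he : 0 ≤ e) (hbnorm : HasOrderUnitBidualNorm X e)
    {L : Submodule ℝ X′′} (heL : 𝟙 ∈ L) {K : Set X′′} (hKL : K ⊆ L)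
    (hKmono : ∀ z ∈ K, ∀ n ∈ L, bidualNonneg X (-n) → z + n ∈ K) {a : X′′} (ha : a ∈ L)
    (c : ℝ) : Dval X e K a ≤ c ↔ a - c • 𝟙 ∈ closure K := by
  rw [mem_closure_iff_forall_sub_smul_mem he hbnorm heL hKL hKmono
    (L.sub_mem (M := X′′) ha (L.smul_mem c heL))]
  constructor
  · intro h ε hε
    have hlt : Dval X e K a < (c + ε : ℝ) :=
      h.trans_lt (by exact_mod_cast lt_add_of_pos_right c hε)
    convert sub_smul_mem_of_Dval_lt he heL hKmono hlt using 1
    module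
  · intro h
    refine EReal.le_of_forall_lt_iff_le.mp fun d hcd => Dval_le_of_sub_smul_mem ?_
    convert h (d - c) (sub_pos.mpr (EReal.coe_lt_coe_iff.mp hcd)) using 1
    module

lemma forall_Pval_eq_Dval_iff_closure_eq (he : 0 ≤ e) (hbnorm : HasOrderUnitBidualNorm X e)
    {Q : Set (StrongDual ℝ X)} (hQ : ∀ η ∈ Q, η e = 1) {L : Submodule ℝ X′′}
    (hL : IsClosed (L : Set X′′)) (heL : 𝟙 ∈ L) {K : Set X′′} (hKL : K ⊆ L)
    (hKmono : ∀ z ∈ K, ∀ n ∈ L, bidualNonneg X (-n) → z + n ∈ K) :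
    (∀ a ∈ L, Pval X Q a = Dval X e K a) ↔ closure K = {z : X′′ | ∀ η ∈ Q, z η ≤ 0} ∩ L := by
  have hD := fun a (ha : a ∈ L) => Dval_le_coe_iff he hbnorm heL hKL hKmono ha
  constructor
  · intro h
    ext b
    have hb0 : b - (0 : ℝ) • 𝟙 = b := by module
    constructor
    · intro hb
      have hbL : b ∈ L := closure_minimal hKL hL hb
      rw [← hb0, ← hD b hbL, ← h b hbL, Pval_le_coe_iff hQ, hb0] at hb
      exact ⟨hb, hbL⟩
    · rintro ⟨hbQ, hbL⟩
      rw [← hb0, ← hD b hbL, ← h b hbL, Pval_le_coe_iff hQ, hb0]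
      exact hbQ
  · intro h a ha
    refine EReal.eq_of_forall_le_coe_iff fun c => ?_
    rw [Pval_le_coe_iff hQ, hD a ha, h]
    simp [L.sub_mem (M := X′′) ha (L.smul_mem c heL)]

lemma exists_coe_eq_Dval_and_sub_smul_mem_closure (he : 0 ≤ e)
    (hbnorm : HasOrderUnitBidualNorm X e) {Q : Set (StrongDual ℝ X)} (hQne : Q.Nonempty)
    (hQ : ∀ η ∈ Q, dualNonneg X η ∧ η e = 1) {L : Submodule ℝ X′′} (heL : 𝟙 ∈ L)
    {K : Set X′′} (hKL : K ⊆ L) (hKmono : ∀ z ∈ K, ∀ n ∈ L, bidualNonneg X (-n) → z + n ∈ K)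
    {a : X′′} (ha : a ∈ L) (hPD : Pval X Q a = Dval X e K a) :
    ∃ d : ℝ, (d : EReal) = Dval X e K a ∧ a - d • 𝟙 ∈ closure K := by
  obtain ⟨η, hη⟩ := hQne
  have hfin : ((Dval X e K a).toReal : EReal) = Dval X e K a := by
    rw [← hPD]
    refine EReal.coe_toReal ?_ ?_
    · exact ((Pval_le_norm he hbnorm hQ a).trans_lt (EReal.coe_lt_top _)).ne
    · exact ((EReal.bot_lt_coe _).trans_le (coe_apply_le_Pval hη a)).ne'
  exact ⟨_, hfin, (Dval_le_coe_iff he hbnorm heL hKL hKmono ha _).1 hfin.ge⟩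

end Duality

theorem stmt2_general
    (X : Type*) [NormedAddCommGroup X] [Lattice X] [NormedSpace ℝ X]
    -- `e` is a positive order unit inducing the lattice norm of the AM-space `X`
    (e : X) (he : 0 ≤ e)
    (hbnorm : ∀ a : StrongDual ℝ (StrongDual ℝ X), ‖a‖ = sInf {c : ℝ |
      bidualNonneg X (a + c • inclusionInDoubleDual ℝ X e) ∧
      bidualNonneg X (c • inclusionInDoubleDual ℝ X e - a)})
    -- standing assumption on `Q`
    (H : Submodule ℝ X)
    (Q : Set (StrongDual ℝ X)) (hQne : Q.Nonempty)
    (hQ : Q = {η : StrongDual ℝ X | ∀ h ∈ H, η h = 0} ∩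
      {η : StrongDual ℝ X | dualNonneg X η ∧ η e = 1})
    -- `L` is a norm-closed subspace of the bidual containing `I(e)`
    (L : Submodule ℝ (StrongDual ℝ (StrongDual ℝ X))) (hL : IsClosed (L : Set (StrongDual ℝ (StrongDual ℝ X))))
    (heL : inclusionInDoubleDual ℝ X e ∈ L)
    -- `K ⊆ L` is a cone containing `0`, stable under adding nonpositive elements of `L`
    (K : Set (StrongDual ℝ (StrongDual ℝ X))) (hKL : K ⊆ (L : Set (StrongDual ℝ (StrongDual ℝ X))))
    (hKmono : ∀ z ∈ K, ∀ n ∈ L, bidualNonneg X (-n) → z + n ∈ K) :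
    ((∀ a ∈ L, Pval X Q a = Dval X e K a) ↔
      closure K = {z : StrongDual ℝ (StrongDual ℝ X) | ∀ η ∈ Q, z η ≤ 0} ∩ L) ∧
    ((∀ a ∈ L, Pval X Q a = Dval X e K a) →
      ∀ a ∈ L, ∃ za ∈ closure K, ∃ d : ℝ, (d : EReal) = Dval X e K a ∧
        d • inclusionInDoubleDual ℝ X e + za = a) := by
  have hQn : ∀ η ∈ Q, dualNonneg X η ∧ η e = 1 := fun η hη => (hQ ▸ hη).2
  refine ⟨forall_Pval_eq_Dval_iff_closure_eq he hbnorm (fun η hη => (hQn η hη).2) hL heL hKL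
    hKmono, fun hPD a ha => ?_⟩
  obtain ⟨d, hd, hdK⟩ :=
    exists_coe_eq_Dval_and_sub_smul_mem_closure he hbnorm hQne hQn heL hKL hKmono ha (hPD a ha)
  exact ⟨_, hdK, d, hd, add_sub_cancel _ _⟩

theorem stmt2
    (X : Type*) [NormedAddCommGroup X] [Lattice X] [IsOrderedAddMonoid X] [HasSolidNorm X] [NormedSpace ℝ X] [CompleteSpace X]
    -- `e` is a positive order unit inducing the lattice norm of the AM-space `X`
    (e : X) (he : 0 ≤ e)
    (hnorm : ∀ f : X, ‖f‖ = sInf {c : ℝ | -(c • e) ≤ f ∧ f ≤ c • e})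
    (hbnorm : ∀ a : StrongDual ℝ (StrongDual ℝ X), ‖a‖ = sInf {c : ℝ |
      bidualNonneg X (a + c • inclusionInDoubleDual ℝ X e) ∧
      bidualNonneg X (c • inclusionInDoubleDual ℝ X e - a)})
    -- standing assumption on `Q`
    (H : Submodule ℝ X) (hH : IsClosed (H : Set X))
    (Q : Set (StrongDual ℝ X)) (hQne : Q.Nonempty) (hQcl : IsClosed Q) (hQconv : Convex ℝ Q)
    (hQ : Q = {η : StrongDual ℝ X | ∀ h ∈ H, η h = 0} ∩
      {η : StrongDual ℝ X | dualNonneg X η ∧ η e = 1})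
    -- `L` is a norm-closed subspace of the bidual containing `I(e)`
    (L : Submodule ℝ (StrongDual ℝ (StrongDual ℝ X))) (hL : IsClosed (L : Set (StrongDual ℝ (StrongDual ℝ X))))
    (heL : inclusionInDoubleDual ℝ X e ∈ L)
    -- `K ⊆ L` is a cone containing `0`, stable under adding nonpositive elements of `L`
    (K : Set (StrongDual ℝ (StrongDual ℝ X))) (hKL : K ⊆ (L : Set (StrongDual ℝ (StrongDual ℝ X))))
    (hK0 : (0 : StrongDual ℝ (StrongDual ℝ X)) ∈ K)
    (hKcone : ∀ z ∈ K, ∀ t : ℝ, 0 ≤ t → t • z ∈ K)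
    (hKmono : ∀ z ∈ K, ∀ n ∈ L, bidualNonneg X (-n) → z + n ∈ K) :
    ((∀ a ∈ L, Pval X Q a = Dval X e K a) ↔
      closure K = {z : StrongDual ℝ (StrongDual ℝ X) | ∀ η ∈ Q, z η ≤ 0} ∩ L) ∧
    ((∀ a ∈ L, Pval X Q a = Dval X e K a) →
      ∀ a ∈ L, ∃ za ∈ closure K, ∃ d : ℝ, (d : EReal) = Dval X e K a ∧
        d • inclusionInDoubleDual ℝ X e + za = a) :=
  stmt2_general X e he hbnorm H Q hQne hQ L hL heL K hKL hKmono
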